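/- arXiv:1403.7678 — 2 statements merged into one kernel-verified Lean document; each statement's English description precedes it below -/
import Mathlib

section
/- Let (A*, d) be a finite-dimensional differential graded algebra of n-Poincaré-duality type. Then the cohomology algebra H*(A) is a finite-dimensional graded commutative algebra of n-Poincaré-duality type. -/
/-!
Since `d` vanishes on `A^{n-1}`, there are no boundaries in top degree, so `Hⁿ = Aⁿ = ℝ·v`; and
`[1] ≠ 0` because `d` raises degrees. For non-degeneracy fix a functional `f` with `f v ≠ 0`;
then `(x, y) ↦ f (x * y)` is a perfect pairing `Aᵃ × Aᵇ → ℝ` whenever `a + b = n`. If a closed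
`x ∈ A^{k+1}` pairs to zero with every closed `y ∈ Aʲ`, the functional `f (x * ·)` vanishes on
`ker d`, hence factors as `ψ ∘ d` with `ψ` a functional on `A^{j+1}`. Representing `ψ` as
`f (w * ·)` with `w ∈ Aᵏ`, the Leibniz rule and `d (w * y) = 0` give `f (w * d y) = ± f (d w * y)`,
so `x = ± d w` by non-degeneracy. The same argument with the factors exchanged gives the other side.
-/

open Module

theorem mem_range_of_forall_mem_ker_apply_eq_zero {K U U' V V' : Type*} [Field K]
    [AddCommGroup U] [Module K U] [AddCommGroup U'] [Module K U']
    [AddCommGroup V] [Module K V] [AddCommGroup V'] [Module K V']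
    {D : U →ₗ[K] U'} {D' : V' →ₗ[K] V} {B : V →ₗ[K] Dual K U} {B' : V' →ₗ[K] Dual K U'}
    (hB : Function.Injective B) (hB' : Function.Surjective B')
    (hadj : ∀ w, B (D' w) = (B' w).comp D) {x : V} (hx : ∀ y, D y = 0 → B x y = 0) :
    x ∈ LinearMap.range D' := by
  obtain ⟨ψ, hψ⟩ : B x ∈ LinearMap.range D.dualMap := by
    rw [LinearMap.range_dualMap_eq_dualAnnihilator_ker, Submodule.mem_dualAnnihilator]
    exact hx
  obtain ⟨w, rfl⟩ := hB' ψ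
  exact ⟨w, hB (by rw [hadj, ← hψ]; rfl)⟩

section GradedAlgebra

variable {A : Type*} [Ring A] [Algebra ℝ A] (𝒜 : ℕ → Submodule ℝ A)

def mulPairing (f : Dual ℝ A) (a b : ℕ) : 𝒜 a →ₗ[ℝ] Dual ℝ (𝒜 b) :=
  ((LinearMap.mul ℝ A).compr₂ f).compl₁₂ (𝒜 a).subtype (𝒜 b).subtype

@[simp]
lemma mulPairing_apply (f : Dual ℝ A) {a b : ℕ} (x : 𝒜 a) (y : 𝒜 b) :
    mulPairing 𝒜 f a b x y = f (x * y) := rfl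

def MulNondegenerate (n : ℕ) : Prop :=
  ∀ a b, a + b = n →
    (∀ x ∈ 𝒜 a, (∀ y ∈ 𝒜 b, x * y = 0) → x = 0) ∧
    (∀ y ∈ 𝒜 b, (∀ x ∈ 𝒜 a, x * y = 0) → y = 0)

variable [GradedAlgebra 𝒜] {n : ℕ}

theorem mulNondegenerate_of_poincareDuality
    (hzero : ∀ x ∈ 𝒜 0, ∃ c : ℝ, x = c • (1 : A))
    {v : A} (hv : v ∈ 𝒜 n) (hvne : v ≠ 0)
    (hnd : ∀ i, 0 < i → i < n →
      (∀ x ∈ 𝒜 i, (∀ y ∈ 𝒜 (n - i), x * y = 0) → x = 0) ∧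
      (∀ y ∈ 𝒜 (n - i), (∀ x ∈ 𝒜 i, x * y = 0) → y = 0)) :
    MulNondegenerate 𝒜 n := by
  have one_mem : (1 : A) ∈ 𝒜 0 := SetLike.one_mem_graded 𝒜
  have scalar_eq_zero : ∀ x ∈ 𝒜 0, (x * v = 0 ∨ v * x = 0) → x = 0 := by
    intro x hx h
    obtain ⟨c, rfl⟩ := hzero x hx
    rw [smul_mul_assoc, one_mul, mul_smul_comm, mul_one, or_self] at h
    rw [(smul_eq_zero.1 h).resolve_right hvne, zero_smul]
  intro a b hab
  rcases Nat.eq_zero_or_pos a with rfl | ha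
  · subst hab
    exact ⟨fun x hx h => scalar_eq_zero x hx (.inl (h v (by simpa using hv))),
      fun y hy h => by simpa using h 1 one_mem⟩
  rcases Nat.eq_zero_or_pos b with rfl | hb
  · subst hab
    exact ⟨fun x hx h => by simpa using h 1 one_mem,
      fun y hy h => scalar_eq_zero y hy (.inr (h v hv))⟩
  obtain rfl : b = n - a := by omega
  exact hnd a ha (by omega)

variable [FiniteDimensional ℝ A]

theorem mulPairing_isPerfPair (hN : MulNondegenerate 𝒜 n) {f : Dual ℝ A}
    (hf : ∀ z ∈ 𝒜 n, f z = 0 → z = 0) {a b : ℕ} (hab : a + b = n) :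
    (mulPairing 𝒜 f a b).IsPerfPair := by
  have mul_eq_zero {x y : A} (hx : x ∈ 𝒜 a) (hy : y ∈ 𝒜 b) (h : f (x * y) = 0) : x * y = 0 :=
    hf _ (hab ▸ SetLike.mul_mem_graded hx hy) h
  refine .of_injective ((injective_iff_map_eq_zero _).2 fun x hx => ?_)
    ((injective_iff_map_eq_zero _).2 fun y hy => ?_)
  · refine Subtype.ext <| (hN a b hab).1 x x.2 fun y hy => mul_eq_zero x.2 hy ?_
    exact congrArg (fun φ : Dual ℝ (𝒜 b) => φ ⟨y, hy⟩) hx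
  · refine Subtype.ext <| (hN a b hab).2 y y.2 fun x hx => mul_eq_zero hx y.2 ?_
    exact congrArg (fun φ : Dual ℝ (𝒜 a) => φ ⟨x, hx⟩) hy

end GradedAlgebra

section DifferentialGradedAlgebra

variable {A : Type*} [Ring A] [Algebra ℝ A] {𝒜 : ℕ → Submodule ℝ A} [GradedAlgebra 𝒜]
  {n : ℕ} {d : A →ₗ[ℝ] A}

theorem one_notMem_range_of_raises_degree (hd : ∀ i, ∀ x ∈ 𝒜 i, d x ∈ 𝒜 (i + 1))
    (hone : (1 : A) ≠ 0) :
    (1 : A) ∉ LinearMap.range d := by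
  have decompose_d_zero (a : A) : (DirectSum.decompose 𝒜 (d a) 0 : A) = 0 := by
    induction a using DirectSum.Decomposition.inductionOn 𝒜 with
    | zero => simp
    | homogeneous x => exact DirectSum.decompose_of_mem_ne 𝒜 (hd _ _ x.2) (Nat.succ_ne_zero _)
    | add x y hx hy => simp [hx, hy]
  rintro ⟨a, ha⟩
  apply hone
  rw [← DirectSum.decompose_of_mem_same 𝒜 (SetLike.one_mem_graded 𝒜), ← ha, decompose_d_zero]

variable (hleib : ∀ (i : ℕ) (x y : A), x ∈ 𝒜 i →
      d (x * y) = d x * y + ((-1 : ℤ) ^ i) • (x * d y))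
  (hdn : ∀ x ∈ 𝒜 (n - 1), d x = 0)
include hleib hdn

theorem mul_d_eq_neg_one_pow_smul {a b : ℕ} (h : a + b + 1 = n) {w y : A} (hw : w ∈ 𝒜 a)
    (hy : y ∈ 𝒜 b) :
    w * d y = (-1 : ℝ) ^ (a + 1) • (d w * y) := by
  have hwy : w * y ∈ 𝒜 (n - 1) := by
    rw [show n - 1 = a + b by omega]; exact SetLike.mul_mem_graded hw hy
  have h0 : d w * y + (-1 : ℝ) ^ a • (w * d y) = 0 := by
    rw [← hdn _ hwy, hleib a w y hw, ← Int.cast_smul_eq_zsmul ℝ]; push_cast; rfl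
  calc w * d y = ((-1 : ℝ) ^ a * (-1) ^ a) • (w * d y) := by
        rw [← mul_pow]; norm_num
    _ = (-1 : ℝ) ^ a • -(d w * y) := by rw [mul_smul, eq_neg_of_add_eq_zero_right h0]
    _ = (-1 : ℝ) ^ (a + 1) • (d w * y) := by rw [pow_succ, mul_neg_one, neg_smul, smul_neg]

variable [FiniteDimensional ℝ A] (hN : MulNondegenerate 𝒜 n) {f : Dual ℝ A}
  (hf : ∀ z ∈ 𝒜 n, f z = 0 → z = 0) (hd : ∀ i, ∀ x ∈ 𝒜 i, d x ∈ 𝒜 (i + 1))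
include hN hf hd

theorem mem_map_d_of_forall_mul_closed_eq_zero {k j : ℕ} (h : k + 1 + j = n) {x : A}
    (hx : x ∈ 𝒜 (k + 1)) (hxy : ∀ y ∈ 𝒜 j, d y = 0 → x * y = 0) :
    x ∈ Submodule.map d (𝒜 k) := by
  have := mulPairing_isPerfPair 𝒜 hN hf h
  have := mulPairing_isPerfPair 𝒜 hN hf (show k + (j + 1) = n by omega)
  obtain ⟨w, hw⟩ := mem_range_of_forall_mem_ker_apply_eq_zero
    (D := d.restrict (hd j)) (D' := ((-1 : ℝ) ^ (k + 1)) • d.restrict (hd k))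
    (B := mulPairing 𝒜 f (k + 1) j) (B' := mulPairing 𝒜 f k (j + 1))
    (LinearMap.IsPerfPair.bijective_left _).injective
    (LinearMap.IsPerfPair.bijective_left _).surjective
    (fun w => LinearMap.ext fun y => by
      simp [mul_d_eq_neg_one_pow_smul hleib hdn (by omega) w.2 y.2])
    (x := ⟨x, hx⟩) (fun y hy => by simp [hxy y y.2 congr(Subtype.val $hy)])
  exact ⟨(-1 : ℝ) ^ (k + 1) • (w : A), Submodule.smul_mem _ _ w.2, by
    rw [map_smul]; exact congr(Subtype.val $hw)⟩

theorem mem_map_d_of_forall_closed_mul_eq_zero {i k : ℕ} (h : i + (k + 1) = n) {y : A}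
    (hy : y ∈ 𝒜 (k + 1)) (hxy : ∀ x ∈ 𝒜 i, d x = 0 → x * y = 0) :
    y ∈ Submodule.map d (𝒜 k) := by
  have := mulPairing_isPerfPair 𝒜 hN hf h
  have := mulPairing_isPerfPair 𝒜 hN hf (show i + 1 + k = n by omega)
  obtain ⟨w, hw⟩ := mem_range_of_forall_mem_ker_apply_eq_zero
    (D := d.restrict (hd i)) (D' := ((-1 : ℝ) ^ (i + 1)) • d.restrict (hd k))
    (B := (mulPairing 𝒜 f i (k + 1)).flip) (B' := (mulPairing 𝒜 f (i + 1) k).flip)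
    (LinearMap.IsPerfPair.bijective_right _).injective
    (LinearMap.IsPerfPair.bijective_right _).surjective
    (fun w => LinearMap.ext fun x => by
      simp [mul_d_eq_neg_one_pow_smul hleib hdn (by omega) x.2 w.2, ← mul_assoc, ← mul_pow])
    (x := ⟨y, hy⟩) (fun x hx => by simp [hxy x x.2 congr(Subtype.val $hx)])
  exact ⟨(-1 : ℝ) ^ (i + 1) • (w : A), Submodule.smul_mem _ _ w.2, by
    rw [map_smul]; exact congr(Subtype.val $hw)⟩

end DifferentialGradedAlgebra

theorem stmt_3_general (A : Type*) [Ring A] [Algebra ℝ A] [FiniteDimensional ℝ A]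
    (n : ℕ) (𝒜 : ℕ → Submodule ℝ A) [GradedAlgebra 𝒜]
    (hone : (1 : A) ≠ 0) (hzero : ∀ x ∈ 𝒜 0, ∃ c : ℝ, x = c • (1 : A))
    (v : A) (hv : v ∈ 𝒜 n) (hvne : v ≠ 0) (hvspan : ∀ x ∈ 𝒜 n, ∃ c : ℝ, x = c • v)
    (hnd : ∀ i, 0 < i → i < n →
      (∀ x ∈ 𝒜 i, (∀ y ∈ 𝒜 (n - i), x * y = 0) → x = 0) ∧
      (∀ y ∈ 𝒜 (n - i), (∀ x ∈ 𝒜 i, x * y = 0) → y = 0))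
    -- the differential
    (d : A →ₗ[ℝ] A)
    (hd : ∀ i, ∀ x ∈ 𝒜 i, d x ∈ 𝒜 (i + 1))
    (hleib : ∀ (i : ℕ) (x y : A), x ∈ 𝒜 i →
      d (x * y) = d x * y + ((-1 : ℤ) ^ i) • (x * d y))
    (hdn : ∀ x ∈ 𝒜 (n - 1), d x = 0) :
    -- H⁰(A) = ℝ·[1], with [1] ≠ 0:
    ((1 : A) ∉ LinearMap.range d ∧
      ∀ x ∈ 𝒜 0 ⊓ LinearMap.ker d, ∃ c : ℝ, x = c • (1 : A)) ∧
    -- Hⁿ(A) = ℝ·[v], with [v] ≠ 0: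
    (v ∉ Submodule.map d (𝒜 (n - 1)) ∧
      ∀ x ∈ 𝒜 n ⊓ LinearMap.ker d, ∃ c : ℝ,
        x - c • v ∈ Submodule.map d (𝒜 (n - 1))) ∧
    -- non-degeneracy of the induced pairings Hⁱ × H^{n-i} → Hⁿ:
    (∀ i, 0 < i → i < n →
      (∀ x ∈ 𝒜 i ⊓ LinearMap.ker d, x ∉ Submodule.map d (𝒜 (i - 1)) →
        ∃ y ∈ 𝒜 (n - i) ⊓ LinearMap.ker d,
          x * y ∉ Submodule.map d (𝒜 (n - 1))) ∧
      (∀ y ∈ 𝒜 (n - i) ⊓ LinearMap.ker d, y ∉ Submodule.map d (𝒜 (n - i - 1)) →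
        ∃ x ∈ 𝒜 i ⊓ LinearMap.ker d,
          x * y ∉ Submodule.map d (𝒜 (n - 1)))) := by
  have hN := mulNondegenerate_of_poincareDuality 𝒜 hzero hv hvne hnd
  obtain ⟨f, hfv⟩ := Module.Projective.exists_dual_ne_zero ℝ hvne
  have hf : ∀ z ∈ 𝒜 n, f z = 0 → z = 0 := by
    intro z hz h
    obtain ⟨c, rfl⟩ := hvspan z hz
    rw [map_smul, smul_eq_mul, mul_eq_zero] at h
    rw [h.resolve_right hfv, zero_smul]
  have hbot : Submodule.map d (𝒜 (n - 1)) = ⊥ := LinearMap.le_ker_iff_map.1 hdn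
  refine ⟨⟨one_notMem_range_of_raises_degree hd hone, fun x hx => hzero x hx.1⟩,
    ⟨by simpa [hbot] using hvne, fun x hx => ?_⟩,
    fun i hi hin => ⟨fun x hx hx' => ?_, fun y hy hy' => ?_⟩⟩
  · obtain ⟨c, rfl⟩ := hvspan x hx.1
    exact ⟨c, by simp [hbot]⟩
  · obtain ⟨k, rfl⟩ := Nat.exists_eq_add_one.2 hi
    rw [Nat.add_sub_cancel] at hx'
    by_contra! h
    refine hx' (mem_map_d_of_forall_mul_closed_eq_zero hleib hdn hN hf hd
      (j := n - (k + 1)) (by omega) hx.1 fun y hy hdy => ?_)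
    simpa [hbot] using h y ⟨hy, hdy⟩
  · obtain ⟨k, hk⟩ : ∃ k, n - i = k + 1 := ⟨n - i - 1, by omega⟩
    rw [hk] at hy
    rw [hk, Nat.add_sub_cancel] at hy'
    by_contra! h
    refine hy' (mem_map_d_of_forall_closed_mul_eq_zero hleib hdn hN hf hd
      (i := i) (by omega) hy.1 fun x hx hdx => ?_)
    simpa [hbot] using h x ⟨hx, hdx⟩

/-- Let `(A*, d)` be a finite-dimensional DGA of `n`-PD-type (graded commutative, `𝒜 0 = ℝ·1`,
`𝒜 n = ℝ·v`, `𝒜 i = 0` for `i > n`, non-degenerate multiplication pairings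
`𝒜 i × 𝒜 (n-i) → 𝒜 n`, and `d 𝒜 (n-1) = 0`, `d 𝒜 0 = 0`).  Then the cohomology algebra
`H*(A)` is a finite-dimensional graded commutative algebra of `n`-PD-type:
`H⁰` is spanned by the nonzero class `[1]`, `Hⁿ` is spanned by the nonzero class `[v]`,
and the induced pairings `Hⁱ × H^{n-i} → Hⁿ` are non-degenerate. -/
theorem stmt_3 (A : Type*) [Ring A] [Algebra ℝ A] [FiniteDimensional ℝ A]
    (n : ℕ) (𝒜 : ℕ → Submodule ℝ A) [GradedAlgebra 𝒜]
    (hcomm : ∀ (i j : ℕ) (x y : A), x ∈ 𝒜 i → y ∈ 𝒜 j →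
      x * y = ((-1 : ℤ) ^ (i * j)) • (y * x))
    (hone : (1 : A) ≠ 0) (hzero : ∀ x ∈ 𝒜 0, ∃ c : ℝ, x = c • (1 : A))
    (htop : ∀ i, n < i → 𝒜 i = ⊥)
    (v : A) (hv : v ∈ 𝒜 n) (hvne : v ≠ 0) (hvspan : ∀ x ∈ 𝒜 n, ∃ c : ℝ, x = c • v)
    (hnd : ∀ i, 0 < i → i < n →
      (∀ x ∈ 𝒜 i, (∀ y ∈ 𝒜 (n - i), x * y = 0) → x = 0) ∧
      (∀ y ∈ 𝒜 (n - i), (∀ x ∈ 𝒜 i, x * y = 0) → y = 0))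
    -- the differential
    (d : A →ₗ[ℝ] A)
    (hd : ∀ i, ∀ x ∈ 𝒜 i, d x ∈ 𝒜 (i + 1))
    (hdd : d.comp d = 0)
    (hleib : ∀ (i : ℕ) (x y : A), x ∈ 𝒜 i →
      d (x * y) = d x * y + ((-1 : ℤ) ^ i) • (x * d y))
    (hdn : ∀ x ∈ 𝒜 (n - 1), d x = 0)
    (hd0 : ∀ x ∈ 𝒜 0, d x = 0) :
    -- H⁰(A) = ℝ·[1], with [1] ≠ 0:
    ((1 : A) ∉ LinearMap.range d ∧
      ∀ x ∈ 𝒜 0 ⊓ LinearMap.ker d, ∃ c : ℝ, x = c • (1 : A)) ∧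
    -- Hⁿ(A) = ℝ·[v], with [v] ≠ 0:
    (v ∉ Submodule.map d (𝒜 (n - 1)) ∧
      ∀ x ∈ 𝒜 n ⊓ LinearMap.ker d, ∃ c : ℝ,
        x - c • v ∈ Submodule.map d (𝒜 (n - 1))) ∧
    -- non-degeneracy of the induced pairings Hⁱ × H^{n-i} → Hⁿ:
    (∀ i, 0 < i → i < n →
      (∀ x ∈ 𝒜 i ⊓ LinearMap.ker d, x ∉ Submodule.map d (𝒜 (i - 1)) →
        ∃ y ∈ 𝒜 (n - i) ⊓ LinearMap.ker d,
          x * y ∉ Submodule.map d (𝒜 (n - 1))) ∧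
      (∀ y ∈ 𝒜 (n - i) ⊓ LinearMap.ker d, y ∉ Submodule.map d (𝒜 (n - i - 1)) →
        ∃ x ∈ 𝒜 i ⊓ LinearMap.ker d,
          x * y ∉ Submodule.map d (𝒜 (n - 1)))) :=
  stmt_3_general A n 𝒜 hone hzero v hv hvne hvspan hnd d hd hleib hdn
end

section
/- Let A* be a bounded filtered DGA such that H*(A) is a finite-dimensional graded algebra of n-PD-type and, for some s, the total complex (Tot* E_s^{•,•}(A), d_s) of the E_s spectral sequence page is a finite-dimensional graded algebra of n-PD-type. Then for every r ≥ s, the total complex of the E_r-page is a graded algebra of n-PD-type. -/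
/-!
If a finite-dimensional graded-commutative DGA `(V, d)` of `n`-PD-type has `d = 0` into the top
degree, its cohomology is again of `n`-PD-type. Indeed the Leibniz rule then makes `d`
skew-adjoint for the Poincaré pairing `V^{a+1} × V^b → V^n ≅ ℝ` (Stokes); the pairing identifies
`V^{a+1}` with the dual of `V^b` and carries the exact forms `d V^a` onto the annihilator of the
closed forms of `V^b`, so a non-exact class pairs nontrivially with a closed one.

On a page `E_r` of `n`-PD-type, `d_r` must vanish into degree `n`: otherwise it hits the top class,
so `Tot^n E_{r'} = 0` for all `r' > r`, contradicting convergence to `H^n(A) ≠ 0`. Induction on `r`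
starting at `s` gives the theorem.
-/

def IsPDType (n : ℕ) (V : ℕ → Type) [∀ k, AddCommGroup (V k)] [∀ k, Module ℝ (V k)]
    (m : ∀ i j, V i →ₗ[ℝ] V j →ₗ[ℝ] V (i + j)) : Prop :=
  (∀ k, FiniteDimensional ℝ (V k)) ∧
  (∃ one : V 0, one ≠ 0 ∧ (∀ x : V 0, ∃ c : ℝ, x = c • one) ∧
    ∀ (i : ℕ) (x : V i), m i 0 x one = x) ∧
  (∀ k, n < k → Subsingleton (V k)) ∧
  (∃ v : V n, v ≠ 0 ∧ ∀ x : V n, ∃ c : ℝ, x = c • v) ∧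
  (∀ i, 0 < i → i < n → ∀ x : V i, x ≠ 0 → ∃ y : V (n - i), m i (n - i) x y ≠ 0)

open Module LinearMap

section GradedAlgebra

variable {V : ℕ → Type} [∀ k, AddCommGroup (V k)] [∀ k, Module ℝ (V k)]

def IsGradedCommutative (mV : ∀ i j, V i →ₗ[ℝ] V j →ₗ[ℝ] V (i + j)) : Prop :=
  ∀ i j (x : V i) (y : V j),
    mV i j x y = cast (congrArg V (Nat.add_comm j i)) (((-1 : ℤ) ^ (i * j)) • mV j i y x)

def IsGradedDerivation (d : ∀ k, V k →ₗ[ℝ] V (k + 1))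
    (mV : ∀ i j, V i →ₗ[ℝ] V j →ₗ[ℝ] V (i + j)) : Prop :=
  ∀ i j (x : V i) (y : V j),
    d (i + j) (mV i j x y) =
      cast (congrArg V (Nat.add_right_comm i 1 j)) (mV (i + 1) j (d i x) y) +
        ((-1 : ℤ) ^ i) • cast (congrArg V (Nat.add_assoc i j 1).symm) (mV i (j + 1) x (d j y))

variable {mV : ∀ i j, V i →ₗ[ℝ] V j →ₗ[ℝ] V (i + j)}

theorem IsGradedCommutative.mul_eq_zero_comm (hcomm : IsGradedCommutative mV) {i j : ℕ}
    (x : V i) (y : V j) : mV i j x y = 0 ↔ mV j i y x = 0 := by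
  rw [hcomm, ← LinearEquiv.cast_apply (R := ℝ) (Nat.add_comm j i), LinearEquiv.map_eq_zero_iff,
    (isUnit_neg_one.pow _).smul_eq_zero]

theorem IsGradedDerivation.apply_unit_eq_zero {d : ∀ k, V k →ₗ[ℝ] V (k + 1)}
    (hd : IsGradedDerivation d mV) (hcomm : IsGradedCommutative mV) {one : V 0}
    (hunit : ∀ i (x : V i), mV i 0 x one = x) : d 0 one = 0 := by
  simpa [hunit, hcomm 0 1 one] using hd 0 0 one one

variable {n : ℕ}

theorem IsPDType.exists_injective_functional (hPD : IsPDType n V mV) :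
    ∃ f : V n →ₗ[ℝ] ℝ, Function.Injective f := by
  obtain ⟨v, hv0, hspan⟩ := hPD.2.2.2.1
  have hbij : Function.Bijective (toSpanSingleton ℝ (V n) v) :=
    ⟨smul_left_injective ℝ hv0, fun x ↦ (hspan x).imp fun c hc ↦ hc.symm⟩
  exact ⟨(LinearEquiv.ofBijective _ hbij).symm, (LinearEquiv.ofBijective _ hbij).symm.injective⟩

theorem IsPDType.exists_mul_ne_zero (hPD : IsPDType n V mV) (hcomm : IsGradedCommutative mV)
    {c e : ℕ} (h : c + e = n) {x : V c} (hx : x ≠ 0) : ∃ y : V e, mV c e x y ≠ 0 := by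
  obtain ⟨-, ⟨one, -, hone, hunit⟩, -, ⟨v, hv0, -⟩, hdual⟩ := hPD
  rcases Nat.eq_zero_or_pos e with rfl | he
  · exact ⟨one, by rwa [hunit]⟩
  rcases Nat.eq_zero_or_pos c with rfl | hc
  · obtain ⟨t, rfl⟩ := hone x
    have ht : t ≠ 0 := by rintro rfl; simp at hx
    refine ⟨(LinearEquiv.cast (R := ℝ) (h.symm.trans (zero_add e))) v, ?_⟩
    rw [Ne, hcomm.mul_eq_zero_comm, map_smul, hunit]
    exact smul_ne_zero ht ((LinearEquiv.map_ne_zero_iff _).2 hv0)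
  obtain ⟨y, hy⟩ := hdual c hc (by omega) x hx
  refine ⟨LinearEquiv.cast (R := ℝ) (by omega : n - c = e) y, ?_⟩
  obtain rfl : n - c = e := by omega
  exact hy

variable (mV) in
def poincarePairing (f : V n →ₗ[ℝ] ℝ) {c e : ℕ} (h : c + e = n) : V c →ₗ[ℝ] Dual ℝ (V e) :=
  (mV c e).compr₂ (f ∘ₗ (LinearEquiv.cast (R := ℝ) h).toLinearMap)

theorem poincarePairing_apply (f : V n →ₗ[ℝ] ℝ) {c e : ℕ} (h : c + e = n) (x : V c) (y : V e) :
    poincarePairing mV f h x y = f (LinearEquiv.cast (R := ℝ) h (mV c e x y)) := rfl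

theorem IsPDType.poincarePairing_injective (hPD : IsPDType n V mV)
    (hcomm : IsGradedCommutative mV) {f : V n →ₗ[ℝ] ℝ} (hf : Function.Injective f) {c e : ℕ}
    (h : c + e = n) : Function.Injective (poincarePairing mV f h) := by
  refine (injective_iff_map_eq_zero _).2 fun x hx ↦ by_contra fun hx0 ↦ ?_
  obtain ⟨y, hy⟩ := hPD.exists_mul_ne_zero hcomm h hx0
  have hxy : f (LinearEquiv.cast (R := ℝ) h (mV c e x y)) = 0 := by
    rw [← poincarePairing_apply, hx, LinearMap.zero_apply]
  rw [map_eq_zero_iff f hf, LinearEquiv.map_eq_zero_iff] at hxy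
  exact hy hxy

theorem IsPDType.poincarePairing_bijective (hPD : IsPDType n V mV)
    (hcomm : IsGradedCommutative mV) {f : V n →ₗ[ℝ] ℝ} (hf : Function.Injective f) {c e : ℕ}
    (h : c + e = n) : Function.Bijective (poincarePairing mV f h) := by
  have : ∀ k, FiniteDimensional ℝ (V k) := hPD.1
  have hinj := hPD.poincarePairing_injective hcomm hf h
  have hle := finrank_le_finrank_of_injective hinj
  have hge := finrank_le_finrank_of_injective
    (hPD.poincarePairing_injective hcomm hf ((add_comm e c).trans h))
  rw [Subspace.dual_finrank_eq] at hle hge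
  refine ⟨hinj, (injective_iff_surjective_of_finrank_eq_finrank ?_).1 hinj⟩
  rw [Subspace.dual_finrank_eq]
  omega

theorem IsGradedDerivation.poincarePairing_comp {d : ∀ k, V k →ₗ[ℝ] V (k + 1)}
    (hd : IsGradedDerivation d mV) (htop : ∀ c, c + 1 = n → d c = 0) (f : V n →ₗ[ℝ] ℝ)
    {a b : ℕ} (h₁ : a + 1 + b = n) (h₂ : a + (b + 1) = n) :
    poincarePairing mV f h₁ ∘ₗ d a =
      (-(-1) ^ a : ℝ) • ((d b).dualMap ∘ₗ poincarePairing mV f h₂) := by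
  ext u y
  have hstokes := congrArg
    (f ∘ₗ (LinearEquiv.cast (R := ℝ) (by omega : a + b + 1 = n)).toLinearMap) (hd a b u y)
  rw [htop (a + b) (by omega), LinearMap.zero_apply, map_zero, map_add, map_zsmul] at hstokes
  simp only [coe_comp, Function.comp_apply, LinearEquiv.coe_coe, LinearEquiv.cast_apply,
    cast_cast] at hstokes
  simp only [LinearMap.smul_apply, coe_comp, Function.comp_apply, dualMap_apply,
    poincarePairing_apply, LinearEquiv.cast_apply]
  rw [zsmul_eq_mul, Int.cast_pow, Int.cast_neg, Int.cast_one] at hstokes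
  rw [smul_eq_mul]
  linear_combination -hstokes

theorem IsPDType.exists_mem_ker_mul_ne_zero (hPD : IsPDType n V mV)
    (hcomm : IsGradedCommutative mV) {d : ∀ k, V k →ₗ[ℝ] V (k + 1)}
    (hd : IsGradedDerivation d mV) (htop : ∀ c, c + 1 = n → d c = 0) {a b : ℕ}
    (h : a + 1 + b = n) {x : V (a + 1)} (hx : x ∉ range (d a)) :
    ∃ y ∈ ker (d b), mV (a + 1) b x y ≠ 0 := by
  have : ∀ k, FiniteDimensional ℝ (V k) := hPD.1
  obtain ⟨f, hf⟩ := hPD.exists_injective_functional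
  have h' : a + (b + 1) = n := by omega
  have hexact : range (poincarePairing mV f h ∘ₗ d a) = (ker (d b)).dualAnnihilator := by
    rw [hd.poincarePairing_comp htop f h h', range_smul _ _ (by simp),
      range_comp_of_range_eq_top _
        (range_eq_top.2 (hPD.poincarePairing_bijective hcomm hf h').2),
      range_dualMap_eq_dualAnnihilator_ker]
  have hxP : poincarePairing mV f h x ∉ (ker (d b)).dualAnnihilator := by
    rintro hmem
    rw [← hexact] at hmem
    obtain ⟨u, hu⟩ := hmem
    exact hx ⟨u, hPD.poincarePairing_injective hcomm hf h hu⟩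
  simp only [Submodule.mem_dualAnnihilator, not_forall] at hxP
  obtain ⟨y, hy, hxy⟩ := hxP
  refine ⟨y, hy, fun h0 ↦ hxy ?_⟩
  rw [poincarePairing_apply, h0, map_zero, map_zero]

end GradedAlgebra

section Cohomology

variable {V W : ℕ → Type} [∀ k, AddCommGroup (V k)] [∀ k, Module ℝ (V k)]
  [∀ k, AddCommGroup (W k)] [∀ k, Module ℝ (W k)]

variable (d : ∀ k, V k →ₗ[ℝ] V (k + 1)) (B : ∀ k, Submodule ℝ (V k)) in
abbrev Cohomology (k : ℕ) : Type :=
  ker (d k) ⧸ (B k).comap (ker (d k)).subtype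

variable {d : ∀ k, V k →ₗ[ℝ] V (k + 1)} {B : ∀ k, Submodule ℝ (V k)}

def cohomologyClass (e : ∀ k, W k ≃ₗ[ℝ] Cohomology d B k) (k : ℕ) : ker (d k) →ₗ[ℝ] W k :=
  (e k).symm.toLinearMap ∘ₗ Submodule.mkQ _

theorem cohomologyClass_surjective (e : ∀ k, W k ≃ₗ[ℝ] Cohomology d B k) (k : ℕ) :
    Function.Surjective (cohomologyClass e k) :=
  (e k).symm.surjective.comp (Submodule.mkQ_surjective _)

theorem cohomologyClass_eq_zero_iff (e : ∀ k, W k ≃ₗ[ℝ] Cohomology d B k) {k : ℕ}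
    (z : ker (d k)) : cohomologyClass e k z = 0 ↔ (z : V k) ∈ B k := by
  simp [cohomologyClass, Submodule.Quotient.mk_eq_zero]

theorem subsingleton_of_forall_mem_ker (e : ∀ k, W k ≃ₗ[ℝ] Cohomology d B k) {k : ℕ}
    (h : ∀ z ∈ ker (d k), z ∈ B k) : Subsingleton (W k) := by
  refine subsingleton_of_forall_eq 0 fun w ↦ ?_
  obtain ⟨z, rfl⟩ := cohomologyClass_surjective e k w
  exact (cohomologyClass_eq_zero_iff e z).2 (h z z.2)

theorem subsingleton_cohomology (e : ∀ k, W k ≃ₗ[ℝ] Cohomology d B k) {k : ℕ}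
    [Subsingleton (V k)] : Subsingleton (W k) :=
  subsingleton_of_forall_mem_ker e fun z _ ↦ Subsingleton.elim z 0 ▸ zero_mem _

theorem cohomologyClass_spans (e : ∀ k, W k ≃ₗ[ℝ] Cohomology d B k) {k : ℕ} {v : V k}
    (hv : v ∈ ker (d k)) (hspan : ∀ x : V k, ∃ c : ℝ, x = c • v) (w : W k) :
    ∃ c : ℝ, w = c • cohomologyClass e k ⟨v, hv⟩ := by
  obtain ⟨z, rfl⟩ := cohomologyClass_surjective e k w
  obtain ⟨c, hc⟩ := hspan z
  exact ⟨c, by rw [← map_smul]; congr 1; exact Subtype.ext hc⟩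

theorem coboundaries_eq_bot {n : ℕ} (hB0 : B 0 = ⊥)
    (hB : ∀ k, B (k + 1) = range (d k)) (htop : ∀ c, c + 1 = n → d c = 0) : B n = ⊥ := by
  cases n with
  | zero => exact hB0
  | succ c => rw [hB, htop c rfl, range_zero]

end Cohomology

section CohomologyPD

variable {V W : ℕ → Type} [∀ k, AddCommGroup (V k)] [∀ k, Module ℝ (V k)]
  [∀ k, AddCommGroup (W k)] [∀ k, Module ℝ (W k)]
  {d : ∀ k, V k →ₗ[ℝ] V (k + 1)} {B : ∀ k, Submodule ℝ (V k)}
  {mV : ∀ i j, V i →ₗ[ℝ] V j →ₗ[ℝ] V (i + j)} {mW : ∀ i j, W i →ₗ[ℝ] W j →ₗ[ℝ] W (i + j)}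
  {n : ℕ}

theorem IsPDType.cohomology_unit (hPD : IsPDType n V mV) (hcomm : IsGradedCommutative mV)
    (hd : IsGradedDerivation d mV) (hB0 : B 0 = ⊥) (e : ∀ k, W k ≃ₗ[ℝ] Cohomology d B k)
    (he : ∀ i j (x : ker (d i)) (y : ker (d j)) (hxy : mV i j x y ∈ ker (d (i + j))),
      cohomologyClass e (i + j) ⟨mV i j x y, hxy⟩ =
        mW i j (cohomologyClass e i x) (cohomologyClass e j y)) :
    ∃ one : W 0, one ≠ 0 ∧ (∀ x : W 0, ∃ c : ℝ, x = c • one) ∧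
      ∀ (i : ℕ) (x : W i), mW i 0 x one = x := by
  obtain ⟨-, ⟨one, hone0, hspan, hunit⟩, -⟩ := hPD
  have hone : one ∈ ker (d 0) := hd.apply_unit_eq_zero hcomm hunit
  refine ⟨cohomologyClass e 0 ⟨one, hone⟩, ?_, cohomologyClass_spans e hone hspan, fun i x ↦ ?_⟩
  · rw [Ne, cohomologyClass_eq_zero_iff, hB0, Submodule.mem_bot]
    exact hone0
  · obtain ⟨z, rfl⟩ := cohomologyClass_surjective e i x
    rw [← he _ _ _ _ (by rw [hunit]; exact z.2)]
    congr 1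
    exact Subtype.ext (hunit i z)

theorem IsPDType.cohomology_top (hPD : IsPDType n V mV) (hB0 : B 0 = ⊥)
    (hB : ∀ k, B (k + 1) = range (d k)) (htop : ∀ c, c + 1 = n → d c = 0)
    (e : ∀ k, W k ≃ₗ[ℝ] Cohomology d B k) :
    ∃ v : W n, v ≠ 0 ∧ ∀ x : W n, ∃ c : ℝ, x = c • v := by
  obtain ⟨-, -, hhigh, ⟨v, hv0, hspan⟩, -⟩ := hPD
  have : Subsingleton (V (n + 1)) := hhigh (n + 1) n.lt_succ_self
  have hv : v ∈ ker (d n) := Subsingleton.elim _ _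
  refine ⟨cohomologyClass e n ⟨v, hv⟩, ?_, cohomologyClass_spans e hv hspan⟩
  rw [Ne, cohomologyClass_eq_zero_iff, coboundaries_eq_bot hB0 hB htop,
    Submodule.mem_bot]
  exact hv0

theorem IsPDType.cohomology_exists_mul_ne_zero (hPD : IsPDType n V mV)
    (hcomm : IsGradedCommutative mV) (hd : IsGradedDerivation d mV)
    (hmker : ∀ i j (x : V i) (y : V j), x ∈ ker (d i) → y ∈ ker (d j) →
      mV i j x y ∈ ker (d (i + j)))
    (hB0 : B 0 = ⊥) (hB : ∀ k, B (k + 1) = range (d k)) (htop : ∀ c, c + 1 = n → d c = 0)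
    (e : ∀ k, W k ≃ₗ[ℝ] Cohomology d B k)
    (he : ∀ i j (x : ker (d i)) (y : ker (d j)) (hxy : mV i j x y ∈ ker (d (i + j))),
      cohomologyClass e (i + j) ⟨mV i j x y, hxy⟩ =
        mW i j (cohomologyClass e i x) (cohomologyClass e j y))
    {a b : ℕ} (h : a + 1 + b = n) {x : W (a + 1)} (hx : x ≠ 0) :
    ∃ y : W b, mW (a + 1) b x y ≠ 0 := by
  obtain ⟨z, rfl⟩ := cohomologyClass_surjective e (a + 1) x
  have hz : (z : V (a + 1)) ∉ range (d a) := by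
    rwa [← hB, ← cohomologyClass_eq_zero_iff e]
  obtain ⟨y, hy, hzy⟩ := hPD.exists_mem_ker_mul_ne_zero hcomm hd htop h hz
  refine ⟨cohomologyClass e b ⟨y, hy⟩, ?_⟩
  rw [← he _ _ _ _ (hmker _ _ _ _ z.2 hy), Ne, cohomologyClass_eq_zero_iff]
  subst h
  rwa [coboundaries_eq_bot hB0 hB htop, Submodule.mem_bot]

theorem IsPDType.cohomology (hPD : IsPDType n V mV)
    (hcomm : IsGradedCommutative mV) (hd : IsGradedDerivation d mV)
    (hmker : ∀ i j (x : V i) (y : V j), x ∈ ker (d i) → y ∈ ker (d j) →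
      mV i j x y ∈ ker (d (i + j)))
    (hB0 : B 0 = ⊥) (hB : ∀ k, B (k + 1) = range (d k)) (htop : ∀ c, c + 1 = n → d c = 0)
    (e : ∀ k, W k ≃ₗ[ℝ] Cohomology d B k)
    (he : ∀ i j (x : ker (d i)) (y : ker (d j)) (hxy : mV i j x y ∈ ker (d (i + j))),
      cohomologyClass e (i + j) ⟨mV i j x y, hxy⟩ =
        mW i j (cohomologyClass e i x) (cohomologyClass e j y)) :
    IsPDType n W mW := by
  have : ∀ k, FiniteDimensional ℝ (V k) := hPD.1
  refine ⟨fun k ↦ .of_surjective _ (cohomologyClass_surjective e k),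
    hPD.cohomology_unit hcomm hd hB0 e he, fun k hk ↦ ?_, hPD.cohomology_top hB0 hB htop e,
    fun i hi0 hin x hx ↦ ?_⟩
  · have : Subsingleton (V k) := hPD.2.2.1 k hk
    exact subsingleton_cohomology e
  · obtain ⟨a, rfl⟩ : ∃ a, i = a + 1 := ⟨i - 1, by omega⟩
    exact hPD.cohomology_exists_mul_ne_zero hcomm hd hmker hB0 hB htop e he
      (Nat.add_sub_cancel' hin.le) hx

theorem IsPDType.differential_into_top_eq_zero (hPD : IsPDType n V mV)
    (hB : ∀ k, B (k + 1) = range (d k)) (e : ∀ k, W k ≃ₗ[ℝ] Cohomology d B k)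
    [Nontrivial (W n)] : ∀ c, c + 1 = n → d c = 0 := by
  rintro c rfl
  by_contra hne
  obtain ⟨z, hz⟩ : ∃ z, d c z ≠ 0 := by simpa [LinearMap.ext_iff] using hne
  obtain ⟨v, -, hspan⟩ := hPD.2.2.2.1
  obtain ⟨t, ht⟩ := hspan (d c z)
  have hv : v ∈ B (c + 1) := by
    rw [hB, show v = t⁻¹ • d c z by rw [ht, inv_smul_smul₀ (by rintro rfl; simp_all)]]
    exact Submodule.smul_mem _ _ (mem_range_self _ _)
  have : Subsingleton (W (c + 1)) := subsingleton_of_forall_mem_ker e fun x _ ↦ by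
    obtain ⟨s, rfl⟩ := hspan x
    exact Submodule.smul_mem _ _ hv
  exact not_subsingleton _ this

end CohomologyPD

theorem subsingleton_page_of_le {T : ℕ → ℕ → Type} [∀ r k, AddCommGroup (T r k)]
    [∀ r k, Module ℝ (T r k)] {d : ∀ r k, T r k →ₗ[ℝ] T r (k + 1)}
    {B : ∀ r k, Submodule ℝ (T r k)} (iso : ∀ r k, T (r + 1) k ≃ₗ[ℝ] Cohomology (d r) (B r) k)
    {k r r' : ℕ} (hr : r ≤ r') [Subsingleton (T r k)] : Subsingleton (T r' k) := by
  induction r', hr using Nat.le_induction with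
  | base => infer_instance
  | succ p _ ih => exact subsingleton_cohomology (iso p)

/-- Let `A*` be a bounded filtered DGA whose cohomology `H*(A)` is a finite-dimensional
graded algebra of `n`-PD-type, and suppose that for some `s` the total complex
`(Tot* E_s, d_s)` of the `E_s`-page of the associated (multiplicative) spectral sequence is
a finite-dimensional graded algebra of `n`-PD-type.  Then for every `r ≥ s` the total
complex of the `E_r`-page is a graded algebra of `n`-PD-type.  The spectral sequence is
given by its totalized pages `T r` with degree-`1` differentials `d r` (derivations for the
page products `m r`, graded commutative), coboundary submodules `B r`, and isomorphisms
`T (r+1) k ≅ ker (d r k) ⧸ B r k` compatible with the products; convergence to `H*(A)` is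
expressed by linear isomorphisms `T r k ≅ H k` for all large `r`. -/
theorem stmt_13 (n s : ℕ)
    (T : ℕ → ℕ → Type)
    [∀ r k, AddCommGroup (T r k)] [∀ r k, Module ℝ (T r k)]
    (d : ∀ r k, T r k →ₗ[ℝ] T r (k + 1))
    (B : ∀ r k, Submodule ℝ (T r k))
    (hB0 : ∀ r, B r 0 = ⊥)
    (hB : ∀ r k, B r (k + 1) = LinearMap.range (d r k))
    -- the products on the pages
    (m : ∀ r i j, T r i →ₗ[ℝ] T r j →ₗ[ℝ] T r (i + j))
    (hcomm : ∀ r i j (x : T r i) (y : T r j),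
      m r i j x y = cast (congrArg (T r) (Nat.add_comm j i))
        (((-1 : ℤ) ^ (i * j)) • m r j i y x))
    (hleib : ∀ r i j (x : T r i) (y : T r j),
      d r (i + j) (m r i j x y) =
        cast (congrArg (T r) (by omega : i + 1 + j = i + j + 1))
            (m r (i + 1) j (d r i x) y) +
          ((-1 : ℤ) ^ i) • cast (congrArg (T r) (by omega : i + (j + 1) = i + j + 1))
            (m r i (j + 1) x (d r j y)))
    (hmker : ∀ r i j (x : T r i) (y : T r j), x ∈ LinearMap.ker (d r i) →
      y ∈ LinearMap.ker (d r j) → m r i j x y ∈ LinearMap.ker (d r (i + j)))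
    -- each page is the cohomology of the previous one, multiplicatively
    (iso : ∀ r k, T (r + 1) k ≃ₗ[ℝ]
      (LinearMap.ker (d r k) ⧸ (B r k).comap (LinearMap.ker (d r k)).subtype))
    (hiso : ∀ r i j (x : LinearMap.ker (d r i)) (y : LinearMap.ker (d r j)),
      (iso r (i + j)).symm (Submodule.Quotient.mk
          (⟨m r i j x y, hmker r i j x y x.2 y.2⟩ : LinearMap.ker (d r (i + j)))) =
        m (r + 1) i j ((iso r i).symm (Submodule.Quotient.mk x))
          ((iso r j).symm (Submodule.Quotient.mk y)))
    -- the abutment `H*(A)` is of `n`-PD-type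
    (H : ℕ → Type) [∀ k, AddCommGroup (H k)] [∀ k, Module ℝ (H k)]
    (mH : ∀ i j, H i →ₗ[ℝ] H j →ₗ[ℝ] H (i + j))
    (hH : IsPDType n H mH)
    -- convergence (boundedness): for large `r` the pages stabilize to the graded of `H*(A)`
    (hconv : ∃ r₀ : ℕ, s ≤ r₀ ∧ ∀ r, r₀ ≤ r → ∀ k, Nonempty (T r k ≃ₗ[ℝ] H k))
    -- `Tot* E_s` is a finite-dimensional graded algebra of `n`-PD-type
    (hs : IsPDType n (T s) (m s)) :
    ∀ r, s ≤ r → IsPDType n (T r) (m r) := by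
  obtain ⟨r₀, -, hconv⟩ := hconv
  have hnontrivial : ∀ r, Nontrivial (T r n) := fun r ↦ by
    by_contra hr
    rw [not_nontrivial_iff_subsingleton] at hr
    have := subsingleton_page_of_le iso (k := n) (le_max_left r r₀)
    obtain ⟨eH⟩ := hconv _ (le_max_right r r₀) n
    obtain ⟨v, hv0, -⟩ := hH.2.2.2.1
    exact hv0 (eH.symm.injective (Subsingleton.elim _ _))
  intro r hr
  induction r, hr using Nat.le_induction with
  | base => exact hs
  | succ p _ ih =>
    have := hnontrivial (p + 1)
    exact ih.cohomology (hcomm p) (hleib p) (hmker p) (hB0 p) (hB p)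
      (ih.differential_into_top_eq_zero (hB p) (iso p)) (iso p) fun i j x y _ ↦ hiso p i j x y
end
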